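/- arXiv:2104.09608 — 2 statements merged into one kernel-verified Lean document; each statement's English description precedes it below -/
import Mathlib

section
/- Let m(z,ζ) = (z·z̄ + (1/2)·z̄²·ζ + (1/2)·z²·ζ̄)/(1 − ζ·ζ̄), a real-valued real-analytic function on {(z,ζ) ∈ ℂ² : |ζ| < 1}. Then for all (z,ζ) with |ζ| < 1 one has m_{zz̄}(z,ζ) = 1/(1 − |ζ|²) ≠ 0, and the Levi determinant vanishes identically: m_{zz̄}·m_{ζζ̄} − m_{zζ̄}·m_{ζz̄} = 0. Hence the Levi matrix of the Gaussier–Merker graphing function has constant rank 1 on {|ζ| < 1}. -/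
open ComplexConjugate

/-- The Gaussier–Merker graphing function
`m(z,ζ) = (z·z̄ + (1/2)·z̄²·ζ + (1/2)·z²·ζ̄)/(1 − ζ·ζ̄)`,
viewed as a `ℂ`-valued function (it is real-valued on `{|ζ| < 1}`). -/
noncomputable def GMm : ℂ × ℂ → ℂ := fun p =>
  (p.1 * conj p.1 + (1 / 2 : ℂ) * (conj p.1) ^ 2 * p.2 + (1 / 2 : ℂ) * p.1 ^ 2 * conj p.2) /
    (1 - p.2 * conj p.2)

/-- Wirtinger derivative `∂_z` (first variable). -/
noncomputable def dz (f : ℂ × ℂ → ℂ) : ℂ × ℂ → ℂ := fun p =>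
  (1 / 2 : ℂ) * (fderiv ℝ f p (1, 0) - Complex.I * fderiv ℝ f p (Complex.I, 0))

/-- Wirtinger derivative `∂_z̄` (first variable). -/
noncomputable def dzbar (f : ℂ × ℂ → ℂ) : ℂ × ℂ → ℂ := fun p =>
  (1 / 2 : ℂ) * (fderiv ℝ f p (1, 0) + Complex.I * fderiv ℝ f p (Complex.I, 0))

/-- Wirtinger derivative `∂_ζ` (second variable). -/
noncomputable def dzeta (f : ℂ × ℂ → ℂ) : ℂ × ℂ → ℂ := fun p =>
  (1 / 2 : ℂ) * (fderiv ℝ f p (0, 1) - Complex.I * fderiv ℝ f p (0, Complex.I))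

/-- Wirtinger derivative `∂_ζ̄` (second variable). -/
noncomputable def dzetabar (f : ℂ × ℂ → ℂ) : ℂ × ℂ → ℂ := fun p =>
  (1 / 2 : ℂ) * (fderiv ℝ f p (0, 1) + Complex.I * fderiv ℝ f p (0, Complex.I))

/-!
On `{|ζ| < 1}` the Gaussier–Merker function satisfies `m_ζ = m_z² / 2`, with
`m_z = (z̄ + z ζ̄) / (1 − ζ ζ̄)`. Applying `∂_z̄` and `∂_ζ̄` to this identity shows that the second
row of the Levi matrix is `m_z` times the first, so the Levi matrix is the outer product
`(1, m_z)ᵀ (m_{zz̄}, m_{zζ̄})`. Its rank is `1` because `m_{zz̄} = 1 / (1 − |ζ|²) ≠ 0`.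
-/

theorem Matrix.rank_vecMulVec_eq_one {K m n : Type*} [Field K] [Fintype m] [Fintype n]
    [DecidableEq n] {w : m → K} {v : n → K} (hw : w ≠ 0) (hv : v ≠ 0) :
    (vecMulVec w v).rank = 1 := by
  refine le_antisymm (rank_vecMulVec_le w v) (Nat.one_le_iff_ne_zero.mpr fun h => ?_)
  rw [rank, Submodule.finrank_eq_zero, LinearMap.range_eq_bot] at h
  obtain ⟨i, hi⟩ := Function.ne_iff.mp hw
  obtain ⟨j, hj⟩ := Function.ne_iff.mp hv
  exact mul_ne_zero hi hj congr($(Matrix.toLin'.map_eq_zero_iff.mp h) i j)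

theorem Matrix.rank_fin_two_of_proportional_rows {K : Type*} [Field K] {a b k : K}
    (ha : a ≠ 0) : !![a, b; k * a, k * b].rank = 1 := by
  have hvec : !![a, b; k * a, k * b] = vecMulVec ![1, k] ![a, b] := by
    ext i j
    fin_cases i <;> fin_cases j <;> simp [vecMulVec_apply]
  rw [hvec]
  exact rank_vecMulVec_eq_one (by simp) (by simp [ha])

/-- Every `ℝ`-linear map `ℂ × ℂ → ℂ` is of this form; `a, b, c, d` are its Wirtinger
derivatives `∂_z, ∂_z̄, ∂_ζ, ∂_ζ̄`. -/
noncomputable def wirtingerCLM (a b c d : ℂ) : ℂ × ℂ →L[ℝ] ℂ :=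
  a • ContinuousLinearMap.fst ℝ ℂ ℂ
    + b • (Complex.conjCLE.toContinuousLinearMap ∘L ContinuousLinearMap.fst ℝ ℂ ℂ)
    + c • ContinuousLinearMap.snd ℝ ℂ ℂ
    + d • (Complex.conjCLE.toContinuousLinearMap ∘L ContinuousLinearMap.snd ℝ ℂ ℂ)

@[simp]
theorem wirtingerCLM_apply (a b c d : ℂ) (x : ℂ × ℂ) :
    wirtingerCLM a b c d x = a * x.1 + b * conj x.1 + c * x.2 + d * conj x.2 := by
  simp [wirtingerCLM]

def HasWirtingerDerivs (f : ℂ × ℂ → ℂ) (a b c d : ℂ) (p : ℂ × ℂ) : Prop :=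
  HasFDerivAt f (wirtingerCLM a b c d) p

theorem hasWirtingerDerivs_const (k : ℂ) (p : ℂ × ℂ) :
    HasWirtingerDerivs (fun _ => k) 0 0 0 0 p :=
  (hasFDerivAt_const k p).congr_fderiv <| by ext <;> simp

theorem hasWirtingerDerivs_fst (p : ℂ × ℂ) : HasWirtingerDerivs (fun q => q.1) 1 0 0 0 p :=
  hasFDerivAt_fst.congr_fderiv <| by ext <;> simp

theorem hasWirtingerDerivs_conj_fst (p : ℂ × ℂ) :
    HasWirtingerDerivs (fun q => conj q.1) 0 1 0 0 p :=
  (Complex.conjCLE.toContinuousLinearMap ∘L ContinuousLinearMap.fst ℝ ℂ ℂ).hasFDerivAt.congr_fderiv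
    <| by ext <;> simp

theorem hasWirtingerDerivs_snd (p : ℂ × ℂ) : HasWirtingerDerivs (fun q => q.2) 0 0 1 0 p :=
  hasFDerivAt_snd.congr_fderiv <| by ext <;> simp

theorem hasWirtingerDerivs_conj_snd (p : ℂ × ℂ) :
    HasWirtingerDerivs (fun q => conj q.2) 0 0 0 1 p :=
  (Complex.conjCLE.toContinuousLinearMap ∘L ContinuousLinearMap.snd ℝ ℂ ℂ).hasFDerivAt.congr_fderiv
    <| by ext <;> simp

namespace HasWirtingerDerivs

variable {f g : ℂ × ℂ → ℂ} {a b c d a' b' c' d' : ℂ} {p : ℂ × ℂ}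

theorem dz_eq (h : HasWirtingerDerivs f a b c d p) : dz f p = a := by
  rw [dz, h.fderiv]
  simp only [wirtingerCLM_apply, map_one, map_zero, Complex.conj_I]
  linear_combination (b - a) / 2 * Complex.I_sq

theorem dzbar_eq (h : HasWirtingerDerivs f a b c d p) : dzbar f p = b := by
  rw [dzbar, h.fderiv]
  simp only [wirtingerCLM_apply, map_one, map_zero, Complex.conj_I]
  linear_combination (a - b) / 2 * Complex.I_sq

theorem dzeta_eq (h : HasWirtingerDerivs f a b c d p) : dzeta f p = c := by
  rw [dzeta, h.fderiv]
  simp only [wirtingerCLM_apply, map_one, map_zero, Complex.conj_I]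
  linear_combination (d - c) / 2 * Complex.I_sq

theorem dzetabar_eq (h : HasWirtingerDerivs f a b c d p) : dzetabar f p = d := by
  rw [dzetabar, h.fderiv]
  simp only [wirtingerCLM_apply, map_one, map_zero, Complex.conj_I]
  linear_combination (c - d) / 2 * Complex.I_sq

theorem congr_of_eventuallyEq (hf : HasWirtingerDerivs f a b c d p) (h : g =ᶠ[nhds p] f) :
    HasWirtingerDerivs g a b c d p :=
  HasFDerivAt.congr_of_eventuallyEq hf h

theorem add (hf : HasWirtingerDerivs f a b c d p) (hg : HasWirtingerDerivs g a' b' c' d' p) :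
    HasWirtingerDerivs (fun q => f q + g q) (a + a') (b + b') (c + c') (d + d') p :=
  (HasFDerivAt.add hf hg).congr_fderiv <| ContinuousLinearMap.ext fun x => by
    simp only [add_apply, wirtingerCLM_apply]; ring

theorem sub (hf : HasWirtingerDerivs f a b c d p) (hg : HasWirtingerDerivs g a' b' c' d' p) :
    HasWirtingerDerivs (fun q => f q - g q) (a - a') (b - b') (c - c') (d - d') p :=
  (HasFDerivAt.sub hf hg).congr_fderiv <| ContinuousLinearMap.ext fun x => by
    simp only [sub_apply, wirtingerCLM_apply]; ring

theorem mul (hf : HasWirtingerDerivs f a b c d p) (hg : HasWirtingerDerivs g a' b' c' d' p) :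
    HasWirtingerDerivs (fun q => f q * g q) (f p * a' + g p * a) (f p * b' + g p * b)
      (f p * c' + g p * c) (f p * d' + g p * d) p :=
  (HasFDerivAt.mul hf hg).congr_fderiv <| ContinuousLinearMap.ext fun x => by
    simp only [add_apply, smul_apply, smul_eq_mul, wirtingerCLM_apply]
    ring

theorem inv (hf : HasWirtingerDerivs f a b c d p) (hp : f p ≠ 0) :
    HasWirtingerDerivs (fun q => (f q)⁻¹) (-a / f p ^ 2) (-b / f p ^ 2) (-c / f p ^ 2)
      (-d / f p ^ 2) p :=
  ((hasFDerivAt_inv' hp).comp p hf).congr_fderiv <| ContinuousLinearMap.ext fun x => by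
    simp only [ContinuousLinearMap.comp_apply, neg_apply,
      ContinuousLinearMap.mulLeftRight_apply, wirtingerCLM_apply]
    field_simp
    ring

theorem div (hf : HasWirtingerDerivs f a b c d p) (hg : HasWirtingerDerivs g a' b' c' d' p)
    (hp : g p ≠ 0) :
    HasWirtingerDerivs (fun q => f q / g q) ((a * g p - f p * a') / g p ^ 2)
      ((b * g p - f p * b') / g p ^ 2) ((c * g p - f p * c') / g p ^ 2)
      ((d * g p - f p * d') / g p ^ 2) p := by
  convert hf.mul (hg.inv hp) using 1
  · simp only [div_eq_mul_inv]
  all_goals field_simp; ring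

theorem half_sq (hf : HasWirtingerDerivs f a b c d p) :
    HasWirtingerDerivs (fun q => f q ^ 2 / 2) (f p * a) (f p * b) (f p * c) (f p * d) p := by
  convert (hf.mul hf).div (hasWirtingerDerivs_const 2 p) two_ne_zero using 1
  · simp only [pow_two]
  all_goals ring

end HasWirtingerDerivs

theorem one_sub_mul_conj_ne_zero {ζ : ℂ} (h : ‖ζ‖ < 1) : 1 - ζ * conj ζ ≠ 0 := by
  rw [Complex.mul_conj', sub_ne_zero, ne_comm]
  exact_mod_cast (pow_lt_one₀ (norm_nonneg ζ) h two_ne_zero).ne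

theorem hasWirtingerDerivs_one_sub_mul_conj_snd (p : ℂ × ℂ) :
    HasWirtingerDerivs (fun q => 1 - q.2 * conj q.2) 0 0 (-conj p.2) (-p.2) p := by
  convert (hasWirtingerDerivs_const 1 p).sub
    ((hasWirtingerDerivs_snd p).mul (hasWirtingerDerivs_conj_snd p)) using 1 <;> simp

noncomputable def GMmz (p : ℂ × ℂ) : ℂ :=
  (conj p.1 + p.1 * conj p.2) / (1 - p.2 * conj p.2)

theorem conj_GMmz (p : ℂ × ℂ) :
    conj (GMmz p) = (p.1 + conj p.1 * p.2) / (1 - p.2 * conj p.2) := by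
  simp only [GMmz, map_div₀, map_add, map_mul, map_sub, map_one, Complex.conj_conj]
  ring

theorem hasWirtingerDerivs_GMm {p : ℂ × ℂ} (hp : ‖p.2‖ < 1) :
    HasWirtingerDerivs GMm (GMmz p) (conj (GMmz p)) (GMmz p ^ 2 / 2) (conj (GMmz p) ^ 2 / 2)
      p := by
  have hz := hasWirtingerDerivs_fst p
  have hzbar := hasWirtingerDerivs_conj_fst p
  have hζ := hasWirtingerDerivs_snd p
  have hζbar := hasWirtingerDerivs_conj_snd p
  have half := hasWirtingerDerivs_const (1 / 2) p
  have hD := one_sub_mul_conj_ne_zero hp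
  have hD' : 1 - conj p.2 * p.2 ≠ 0 := by rwa [mul_comm]
  convert (((hz.mul hzbar).add ((half.mul (hzbar.mul hzbar)).mul hζ)).add
    ((half.mul (hz.mul hz)).mul hζbar)).div (hasWirtingerDerivs_one_sub_mul_conj_snd p)
    hD using 1
  · funext q; simp only [GMm]; ring
  all_goals simp only [↓conj_GMmz, GMmz]; field_simp; ring

theorem hasWirtingerDerivs_GMmz {p : ℂ × ℂ} (hp : ‖p.2‖ < 1) :
    HasWirtingerDerivs GMmz (conj p.2 / (1 - p.2 * conj p.2)) (1 / (1 - p.2 * conj p.2))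
      (GMmz p * conj p.2 / (1 - p.2 * conj p.2)) (conj (GMmz p) / (1 - p.2 * conj p.2)) p := by
  have hD := one_sub_mul_conj_ne_zero hp
  have hD' : 1 - conj p.2 * p.2 ≠ 0 := by rwa [mul_comm]
  convert ((hasWirtingerDerivs_conj_fst p).add ((hasWirtingerDerivs_fst p).mul
    (hasWirtingerDerivs_conj_snd p))).div (hasWirtingerDerivs_one_sub_mul_conj_snd p) hD using 1
  · rfl
  · field_simp; ring
  · field_simp; ring
  all_goals simp only [↓conj_GMmz, GMmz]; field_simp; ring

theorem isOpen_norm_snd_lt_one : IsOpen {q : ℂ × ℂ | ‖q.2‖ < 1} :=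
  isOpen_lt (continuous_norm.comp continuous_snd) continuous_const

theorem dz_GMm_eventuallyEq {p : ℂ × ℂ} (hp : ‖p.2‖ < 1) : dz GMm =ᶠ[nhds p] GMmz := by
  filter_upwards [isOpen_norm_snd_lt_one.mem_nhds hp] with q hq
  exact (hasWirtingerDerivs_GMm hq).dz_eq

theorem dzeta_GMm_eventuallyEq {p : ℂ × ℂ} (hp : ‖p.2‖ < 1) :
    dzeta GMm =ᶠ[nhds p] fun q => GMmz q ^ 2 / 2 := by
  filter_upwards [isOpen_norm_snd_lt_one.mem_nhds hp] with q hq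
  exact (hasWirtingerDerivs_GMm hq).dzeta_eq

/-- On `{|ζ| < 1}` one has `m_{zz̄} = 1/(1 − |ζ|²) ≠ 0` and the Levi determinant
`m_{zz̄}·m_{ζζ̄} − m_{zζ̄}·m_{ζz̄}` vanishes identically; hence the Levi matrix of the
Gaussier–Merker graphing function has constant rank 1 on `{|ζ| < 1}`. -/
theorem gaussierMerker_levi_rank_one :
    ∀ p : ℂ × ℂ, ‖p.2‖ < 1 →
      dzbar (dz GMm) p = 1 / (1 - (‖p.2‖ : ℂ) ^ 2) ∧
      (1 / (1 - (‖p.2‖ : ℂ) ^ 2)) ≠ 0 ∧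
      dzbar (dz GMm) p * dzetabar (dzeta GMm) p
        - dzetabar (dz GMm) p * dzbar (dzeta GMm) p = 0 ∧
      Matrix.rank
        !![dzbar (dz GMm) p, dzetabar (dz GMm) p;
           dzbar (dzeta GMm) p, dzetabar (dzeta GMm) p] = 1 := by
  intro p hp
  have hD := one_sub_mul_conj_ne_zero hp
  have hmz := (hasWirtingerDerivs_GMmz hp).congr_of_eventuallyEq (dz_GMm_eventuallyEq hp)
  have hmζ := (hasWirtingerDerivs_GMmz hp).half_sq.congr_of_eventuallyEq
    (dzeta_GMm_eventuallyEq hp)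
  rw [hmz.dzbar_eq, hmz.dzetabar_eq, hmζ.dzbar_eq, hmζ.dzetabar_eq, ← Complex.mul_conj']
  exact ⟨rfl, one_div_ne_zero hD, by ring,
    Matrix.rank_fin_two_of_proportional_rows (one_div_ne_zero hD)⟩
end

section
/- Fix ω > 0 and let S_ω = {(r cos t, r sin t, r e^{ωt}) : r > 0, t ∈ ℝ} ⊂ ℝ³. For s ∈ ℝ, ρ > 0 define the linear map L_{s,ρ}(x₁,x₂,x₃) = (ρ(x₁ cos s − x₂ sin s), ρ(x₁ sin s + x₂ cos s), ρ e^{ωs} x₃). Then each L_{s,ρ} maps S_ω onto S_ω, and for any p, q ∈ S_ω there exists a unique pair (s,ρ) ∈ ℝ × (0,∞) with L_{s,ρ}(p) = q. Hence the 2-parameter group {L_{s,ρ}} acts simply transitively on S_ω. -/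
/-- The surface `S_ω = {(r cos t, r sin t, r e^{ωt}) : r > 0, t ∈ ℝ}` (model (2a)). -/
def Somega (ω : ℝ) : Set (ℝ × ℝ × ℝ) :=
  {x | ∃ r t : ℝ, 0 < r ∧ x = (r * Real.cos t, r * Real.sin t, r * Real.exp (ω * t))}

/-- The linear map `L_{s,ρ}(x₁,x₂,x₃) = (ρ(x₁cos s − x₂ sin s), ρ(x₁ sin s + x₂ cos s), ρ e^{ωs} x₃)`. -/
noncomputable def Lmap (ω s ρ : ℝ) : ℝ × ℝ × ℝ → ℝ × ℝ × ℝ := fun x =>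
  (ρ * (x.1 * Real.cos s - x.2.1 * Real.sin s),
   ρ * (x.1 * Real.sin s + x.2.1 * Real.cos s),
   ρ * Real.exp (ω * s) * x.2.2)

lemma Lmap_param (ω s ρ r t : ℝ) :
    Lmap ω s ρ (r * Real.cos t, r * Real.sin t, r * Real.exp (ω * t)) =
    ((ρ * r) * Real.cos (t + s), (ρ * r) * Real.sin (t + s),
     (ρ * r) * Real.exp (ω * (t + s))) := by
  unfold Lmap
  refine Prod.ext ?_ (Prod.ext ?_ ?_) <;>
    simp [Real.cos_add, Real.sin_add, mul_add, Real.exp_add] <;> ring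

/-- Each `L_{s,ρ}` (with `ρ > 0`) maps `S_ω` onto itself, and for any `p, q ∈ S_ω` there is a
unique pair `(s,ρ) ∈ ℝ × (0,∞)` with `L_{s,ρ}(p) = q`: the 2-parameter group `{L_{s,ρ}}`
acts simply transitively on `S_ω`. -/
theorem Somega_simply_transitive (ω : ℝ) (hω : 0 < ω) :
    (∀ s ρ : ℝ, 0 < ρ → Lmap ω s ρ '' Somega ω = Somega ω) ∧
    (∀ p ∈ Somega ω, ∀ q ∈ Somega ω,
      ∃! sr : ℝ × ℝ, 0 < sr.2 ∧ Lmap ω sr.1 sr.2 p = q) := by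
  constructor
  · intro s ρ hρ
    ext x
    constructor
    · rintro ⟨y, ⟨r, t, hr, rfl⟩, rfl⟩
      exact ⟨ρ * r, t + s, mul_pos hρ hr, Lmap_param ω s ρ r t⟩
    · rintro ⟨r, t, hr, rfl⟩
      refine ⟨(r / ρ * Real.cos (t - s), r / ρ * Real.sin (t - s),
        r / ρ * Real.exp (ω * (t - s))), ⟨r / ρ, t - s, div_pos hr hρ, rfl⟩, ?_⟩
      rw [Lmap_param]
      have h1 : ρ * (r / ρ) = r := by field_simp
      have h2 : t - s + s = t := by ring
      rw [h1, h2]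
  · rintro p ⟨r, t, hr, rfl⟩ q ⟨r', t', hr', rfl⟩
    refine ⟨(t' - t, r' / r), ⟨div_pos hr' hr, ?_⟩, ?_⟩
    · rw [Lmap_param]
      have h1 : r' / r * r = r' := by field_simp
      have h2 : t + (t' - t) = t' := by ring
      rw [h1, h2]
    · rintro ⟨s, ρ⟩ ⟨hρ, heq⟩
      rw [Lmap_param] at heq
      simp only [Prod.mk.injEq] at heq
      obtain ⟨h1, h2, h3⟩ := heq
      have hsq : (ρ * r) ^ 2 = r' ^ 2 := by
        calc (ρ * r) ^ 2
            = (ρ * r) ^ 2 * ((Real.sin (t + s)) ^ 2 + (Real.cos (t + s)) ^ 2) := by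
              rw [Real.sin_sq_add_cos_sq]; ring
          _ = (ρ * r * Real.cos (t + s)) ^ 2 + (ρ * r * Real.sin (t + s)) ^ 2 := by ring
          _ = (r' * Real.cos t') ^ 2 + (r' * Real.sin t') ^ 2 := by rw [h1, h2]
          _ = r' ^ 2 * ((Real.sin t') ^ 2 + (Real.cos t') ^ 2) := by ring
          _ = r' ^ 2 := by rw [Real.sin_sq_add_cos_sq]; ring
      have hρr : ρ * r = r' := by nlinarith [mul_pos hρ hr, hr']
      rw [hρr] at h3
      have hexp : Real.exp (ω * (t + s)) = Real.exp (ω * t') :=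
        mul_left_cancel₀ (ne_of_gt hr') h3
      have hts : ω * (t + s) = ω * t' := Real.exp_injective hexp
      have hs : s = t' - t := by
        have := mul_left_cancel₀ (ne_of_gt hω) hts
        linarith
      have hρ' : ρ = r' / r := by
        field_simp
        linarith [hρr]
      exact Prod.ext hs hρ'
end
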